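/- For every R ≥ 0, (1/π) · ∫_{{(x,y) ∈ ℝ² : x² + y² ≤ R²}} 4 y F(2y) dx dy = R² - 1/4 + (1/4) e^{-4R²}, where F is Dawson's integral. (The integrand 4yF(2y) is the limiting eigenvalue density of the symplectic Ginibre ensemble at the origin, and the identity evaluates the expected number of eigenvalues in the disc of radius R.) -/

import Mathlib

/-!
Slice the disc vertically. Since `F' = 1 - 2zF`, the function `y - F(2y)/2` is a primitive of
`4yF(2y)`, so the slice over `[-s, s]` contributes `2s - F(2s)`; by evenness and the substitution
`t = 2u`, `F(2s) = ∫_{-s}^{s} e^{4(u² - s²)} du`. With `s² = R² - x²` this is exactly what the slice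
of the radial function `1 - e^{4(x² + y² - R²)}` contributes, so the two disc integrals agree, and
polar coordinates turn the radial one into `π ∫₀^{R²} (1 - e^{4(t - R²)}) dt`.
-/

open MeasureTheory Real Filter

/-- Dawson's integral `F(z) = e^(-z²) ∫₀^z e^(t²) dt`. -/
noncomputable def dawson (z : ℝ) : ℝ := Real.exp (-z ^ 2) * ∫ t in (0:ℝ)..z, Real.exp (t ^ 2)

open Set intervalIntegral

theorem intervalIntegral.integral_neg_self_eq_two_smul_of_even {E : Type*} [NormedAddCommGroup E]
    [NormedSpace ℝ E] {f : ℝ → E} (hf : ∀ x, f (-x) = f x) (s : ℝ)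
    (hint : IntervalIntegrable f volume (-s) s) :
    ∫ x in -s..s, f x = (2 : ℝ) • ∫ x in 0..s, f x := by
  have hleft : ∫ x in -s..0, f x = ∫ x in 0..s, f x := by
    simpa [hf] using (integral_comp_neg (a := 0) (b := s) f).symm
  have hzero : (0 : ℝ) ∈ uIcc (-s) s := by
    rcases le_total 0 s with h | h <;> simp [h]
  rw [← integral_add_adjacent_intervals (hint.mono_set (uIcc_subset_uIcc_left hzero))
    (hint.mono_set (uIcc_subset_uIcc_right hzero)), hleft, two_smul]

@[fun_prop]
theorem continuous_dawson : Continuous dawson :=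
  (continuous_exp.comp (by fun_prop)).mul
    (continuous_primitive (fun a b => (continuous_exp.comp (by fun_prop)).intervalIntegrable a b) 0)

theorem hasDerivAt_dawson (z : ℝ) : HasDerivAt dawson (1 - 2 * z * dawson z) z := by
  have hprim : HasDerivAt (fun u => ∫ t in (0:ℝ)..u, exp (t ^ 2)) (exp (z ^ 2)) z :=
    integral_hasDerivAt_right ((continuous_exp.comp (by fun_prop)).intervalIntegrable 0 z)
      ((continuous_exp.comp (by fun_prop)).stronglyMeasurableAtFilter _ _)
      (continuous_exp.comp (by fun_prop)).continuousAt
  have hgauss : HasDerivAt (fun u : ℝ => exp (-u ^ 2)) (exp (-z ^ 2) * (-2 * z)) z := by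
    simpa using ((hasDerivAt_pow 2 z).neg).exp
  refine (hgauss.mul hprim).congr_deriv ?_
  rw [dawson, ← exp_add, neg_add_cancel, exp_zero]
  ring

theorem dawson_neg (z : ℝ) : dawson (-z) = -dawson z := by
  have h := integral_comp_neg (a := 0) (b := -z) (fun t => exp (t ^ 2))
  simp only [neg_sq, neg_zero, neg_neg] at h
  rw [dawson, dawson, neg_sq, h, integral_symm]
  ring

theorem integral_mul_dawson_two_mul (s : ℝ) :
    ∫ y in -s..s, 4 * y * dawson (2 * y) = 2 * s - dawson (2 * s) := by
  have hderiv : ∀ y ∈ uIcc (-s) s,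
      HasDerivAt (fun y => y - dawson (2 * y) / 2) (4 * y * dawson (2 * y)) y := fun y _ =>
    ((hasDerivAt_id y).sub
      (((hasDerivAt_dawson (2 * y)).comp y ((hasDerivAt_id y).const_mul 2)).div_const 2))
      |>.congr_deriv (by ring)
  rw [integral_eq_sub_of_hasDerivAt hderiv
    (Continuous.intervalIntegrable (by fun_prop) _ _), mul_neg, dawson_neg]
  ring

theorem dawson_two_mul_eq_integral (s : ℝ) :
    dawson (2 * s) = ∫ u in -s..s, exp (4 * (u ^ 2 - s ^ 2)) := by
  have hsubst : ∫ t in (0:ℝ)..2 * s, exp (t ^ 2) = 2 * ∫ u in 0..s, exp ((2 * u) ^ 2) := by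
    rw [integral_comp_mul_left (fun t => exp (t ^ 2)) two_ne_zero, mul_zero, smul_eq_mul,
      mul_inv_cancel_left₀ two_ne_zero]
  have heven : ∫ u in -s..s, exp ((2 * u) ^ 2) = 2 * ∫ u in 0..s, exp ((2 * u) ^ 2) :=
    integral_neg_self_eq_two_smul_of_even (fun u => by ring_nf) s
      (Continuous.intervalIntegrable (by fun_prop) _ _)
  rw [dawson, hsubst, ← heven, ← intervalIntegral.integral_const_mul]
  congr 1 with u
  rw [← exp_add]
  ring_nf

def disc (R : ℝ) : Set (ℝ × ℝ) := {p | p.1 ^ 2 + p.2 ^ 2 ≤ R ^ 2}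

theorem measurableSet_disc (R : ℝ) : MeasurableSet (disc R) :=
  measurableSet_le (by fun_prop) (by fun_prop)

theorem isCompact_disc (R : ℝ) : IsCompact (disc R) := by
  refine Metric.isCompact_of_isClosed_isBounded (isClosed_le (by fun_prop) (by fun_prop)) ?_
  refine isBounded_iff_forall_norm_le.2 ⟨|R|, fun p hp => ?_⟩
  have hp : p.1 ^ 2 + p.2 ^ 2 ≤ R ^ 2 := hp
  exact max_le (sq_le_sq.1 (by nlinarith)) (sq_le_sq.1 (by nlinarith))

theorem setOf_sq_add_sq_le_eq_Icc {x R : ℝ} (hx : x ^ 2 ≤ R ^ 2) :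
    {y : ℝ | x ^ 2 + y ^ 2 ≤ R ^ 2} = Icc (-√(R ^ 2 - x ^ 2)) √(R ^ 2 - x ^ 2) := by
  ext y
  change x ^ 2 + y ^ 2 ≤ R ^ 2 ↔ _
  rw [mem_Icc, ← Real.sq_le (by linarith)]
  constructor <;> intro h <;> linarith

theorem integral_disc_eq_integral_slices {E : Type*} [NormedAddCommGroup E] [NormedSpace ℝ E]
    {R : ℝ} (hR : 0 ≤ R) {g : ℝ × ℝ → E} (hg : IntegrableOn g (disc R)) :
    ∫ p in disc R, g p = ∫ x in -R..R, ∫ y in -√(R ^ 2 - x ^ 2)..√(R ^ 2 - x ^ 2), g (x, y) := by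
  have hslice : ∀ x,
      ∫ y, (disc R).indicator g (x, y) = ∫ y in {y | x ^ 2 + y ^ 2 ≤ R ^ 2}, g (x, y) :=
    fun x => MeasureTheory.integral_indicator (measurableSet_le (by fun_prop) (by fun_prop))
  have houter : ∀ x ∉ Icc (-R) R, ∫ y, (disc R).indicator g (x, y) = 0 := by
    intro x hx
    have hRx : R ^ 2 < x ^ 2 := by
      rw [mem_Icc, ← abs_le, not_le] at hx
      exact sq_lt_sq.2 (by rwa [abs_of_nonneg hR])
    have hempty : {y : ℝ | x ^ 2 + y ^ 2 ≤ R ^ 2} = ∅ :=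
      eq_empty_of_forall_notMem fun y hy => by nlinarith [sq_nonneg y, hy.out]
    rw [hslice, hempty, Measure.restrict_empty, integral_zero_measure]
  have hinner : ∀ x ∈ Icc (-R) R, ∫ y, (disc R).indicator g (x, y)
      = ∫ y in -√(R ^ 2 - x ^ 2)..√(R ^ 2 - x ^ 2), g (x, y) := by
    intro x hx
    rw [hslice, setOf_sq_add_sq_le_eq_Icc (sq_le_sq' hx.1 hx.2), integral_Icc_eq_integral_Ioc,
      ← integral_of_le (neg_le_self (sqrt_nonneg _))]
  calc ∫ p in disc R, g p = ∫ p, (disc R).indicator g p :=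
        (MeasureTheory.integral_indicator (measurableSet_disc R)).symm
    _ = ∫ x, ∫ y, (disc R).indicator g (x, y) := by
      rw [Measure.volume_eq_prod]
      exact integral_prod _ ((integrable_indicator_iff (measurableSet_disc R)).2 hg)
    _ = ∫ x in Icc (-R) R, ∫ y, (disc R).indicator g (x, y) :=
      (setIntegral_eq_integral_of_forall_compl_eq_zero houter).symm
    _ = ∫ x in -R..R, ∫ y in -√(R ^ 2 - x ^ 2)..√(R ^ 2 - x ^ 2), g (x, y) := by
      rw [setIntegral_congr_fun measurableSet_Icc hinner, integral_of_le (by linarith),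
        integral_Icc_eq_integral_Ioc]

theorem integral_disc_comp_sq_add_sq {R : ℝ} (hR : 0 ≤ R) {f : ℝ → ℝ} (hf : Continuous f) :
    ∫ p in disc R, f (p.1 ^ 2 + p.2 ^ 2) = π * ∫ t in 0..R ^ 2, f t := by
  set h : ℝ → ℝ := (Iic R).indicator fun r => r * f (r ^ 2)
  have hpolar : ∀ p ∈ polarCoord.target,
      p.1 • (disc R).indicator (fun q => f (q.1 ^ 2 + q.2 ^ 2)) (polarCoord.symm p)
        = h p.1 * 1 := by
    rintro ⟨r, θ⟩ ⟨hr, -⟩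
    have hr : 0 < r := hr
    have hnorm : (r * cos θ) ^ 2 + (r * sin θ) ^ 2 = r ^ 2 := by
      rw [mul_pow, mul_pow, ← mul_add, cos_sq_add_sin_sq, mul_one]
    have hmem : (r * cos θ, r * sin θ) ∈ disc R ↔ r ∈ Iic R := by
      change (r * cos θ) ^ 2 + (r * sin θ) ^ 2 ≤ R ^ 2 ↔ r ≤ R
      rw [hnorm, sq_le_sq₀ hr.le hR]
    by_cases hrR : r ∈ Iic R
    · simp [h, polarCoord_symm_apply, indicator_of_mem (hmem.2 hrR), indicator_of_mem hrR, hnorm]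
    · simp [h, polarCoord_symm_apply, indicator_of_notMem (mt hmem.1 hrR), indicator_of_notMem hrR]
  have hradial : ∫ r in Ioi 0, h r = ∫ r in 0..R, r * f (r ^ 2) := by
    rw [setIntegral_indicator measurableSet_Iic, Ioi_inter_Iic, integral_of_le hR]
  have hsubst : ∫ r in 0..R, r * f (r ^ 2) = (1 / 2) * ∫ t in 0..R ^ 2, f t := by
    have := integral_comp_mul_deriv (a := 0) (b := R) (f := fun r => r ^ 2) (f' := fun r => 2 * r)
      (fun r _ => by simpa using hasDerivAt_pow 2 r) (by fun_prop) hf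
    simp only [Function.comp_def, zero_pow two_ne_zero] at this
    rw [← this, ← intervalIntegral.integral_const_mul]
    congr 1 with r
    ring
  calc ∫ p in disc R, f (p.1 ^ 2 + p.2 ^ 2)
      = ∫ p, (disc R).indicator (fun q => f (q.1 ^ 2 + q.2 ^ 2)) p :=
        (MeasureTheory.integral_indicator (measurableSet_disc R)).symm
    _ = ∫ p in Ioi 0 ×ˢ Ioo (-π) π, h p.1 * 1 := by
        rw [← integral_comp_polarCoord_symm,
          setIntegral_congr_fun polarCoord.open_target.measurableSet hpolar]
        rfl
    _ = (∫ r in Ioi 0, h r) * ∫ θ in Ioo (-π) π, (1 : ℝ) := by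
        rw [Measure.volume_eq_prod]
        exact setIntegral_prod_mul h (fun _ => 1) _ _
    _ = π * ∫ t in 0..R ^ 2, f t := by
        rw [hradial, hsubst, setIntegral_const, Real.volume_real_Ioo_of_le (by linarith [pi_pos]),
          smul_eq_mul]
        ring

theorem integral_disc_mul_dawson_two_mul {R : ℝ} (hR : 0 ≤ R) :
    ∫ p in disc R, 4 * p.2 * dawson (2 * p.2)
      = ∫ p in disc R, (1 - exp (4 * (p.1 ^ 2 + p.2 ^ 2 - R ^ 2))) := by
  rw [integral_disc_eq_integral_slices hR
      ((by fun_prop : Continuous _).continuousOn.integrableOn_compact (isCompact_disc R)),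
    integral_disc_eq_integral_slices hR
      ((by fun_prop : Continuous _).continuousOn.integrableOn_compact (isCompact_disc R))]
  refine integral_congr fun x hx => ?_
  rw [uIcc_of_le (by linarith)] at hx
  set s := √(R ^ 2 - x ^ 2)
  have hs : s ^ 2 = R ^ 2 - x ^ 2 := sq_sqrt (by nlinarith [hx.1, hx.2])
  have hexp : ∀ u, exp (4 * (x ^ 2 + u ^ 2 - R ^ 2)) = exp (4 * (u ^ 2 - s ^ 2)) := fun u => by
    rw [hs]; ring_nf
  simp only [hexp]
  rw [integral_mul_dawson_two_mul, dawson_two_mul_eq_integral,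
    integral_sub intervalIntegrable_const (Continuous.intervalIntegrable (by fun_prop) _ _),
    intervalIntegral.integral_const, smul_eq_mul, mul_one]
  ring

theorem expected_number_origin_GinSE (R : ℝ) (hR : 0 ≤ R) :
    (1 / π) * ∫ p in {p : ℝ × ℝ | p.1 ^ 2 + p.2 ^ 2 ≤ R ^ 2}, 4 * p.2 * dawson (2 * p.2)
      = R ^ 2 - 1 / 4 + (1 / 4) * Real.exp (-4 * R ^ 2) := by
  have hprim : ∀ t ∈ uIcc 0 (R ^ 2),
      HasDerivAt (fun t => t - exp (4 * (t - R ^ 2)) / 4) (1 - exp (4 * (t - R ^ 2))) t :=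
    fun t _ => by
      have := ((((hasDerivAt_id t).sub_const (R ^ 2)).const_mul 4).exp).div_const 4
      exact ((hasDerivAt_id t).sub this).congr_deriv (by simp only [id]; ring)
  calc (1 / π) * ∫ p in disc R, 4 * p.2 * dawson (2 * p.2)
      = (1 / π) * (π * ∫ t in 0..R ^ 2, (1 - exp (4 * (t - R ^ 2)))) := by
        rw [integral_disc_mul_dawson_two_mul hR,
          ← integral_disc_comp_sq_add_sq hR (f := fun t => 1 - exp (4 * (t - R ^ 2))) (by fun_prop)]
    _ = R ^ 2 - 1 / 4 + (1 / 4) * exp (-4 * R ^ 2) := by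
        rw [integral_eq_sub_of_hasDerivAt hprim (Continuous.intervalIntegrable (by fun_prop) _ _),
          sub_self, mul_zero, exp_zero]
        field_simp
        ring_nf
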